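/- arXiv:2605.15563 — 5 statements merged into one kernel-verified Lean document; each statement's English description precedes it below -/
import Mathlib

section
/- Let m, n, p be positive natural numbers, let U ∈ ℝ^{m×p} and X ∈ ℝ^{n×p} be real matrices such that the stacked matrix [Uᵀ, Xᵀ]ᵀ ∈ ℝ^{(m+n)×p} has full row rank m+n, and let Π ∈ ℝ^{p×p} be the matrix of the orthogonal projection of ℝ^p (with the standard inner product) onto the kernel of X, i.e. Π is symmetric, idempotent, its range is {v ∈ ℝ^p : Xv = 0}, and its kernel is the row space of X. Then the matrix M = U Π Uᵀ ∈ ℝ^{m×m} is symmetric positive definite. -/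
/-!
Since `Pr` is a symmetric idempotent, `U Pr Uᵀ = (U Pr)(U Pr)ᵀ`, so it is positive definite as
soon as `x ↦ xᵀ U Pr` is injective. If `xᵀ U Pr = 0`, then `Uᵀ x` lies in the kernel of `Pr`,
which is the row space of `X`: `Uᵀ x = Xᵀ w`. Then `(x, -w)` is a left null vector of the
stacked matrix `[U; X]`, which has full row rank, so `x = 0`.
-/

open Matrix

namespace Matrix

variable {R : Type*} [Field R] {m n p : Type*} [Fintype m] [Fintype n] [Fintype p]

theorem vecMul_injective_of_rank_eq_card {A : Matrix m n R} (hA : A.rank = Fintype.card m) :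
    Function.Injective A.vecMul :=
  vecMul_injective_iff.2 <| linearIndependent_iff_card_eq_finrank_span.2 <| by
    rw [← hA, rank_eq_finrank_span_row, Set.finrank]

theorem eq_zero_of_vecMul_eq_of_rank_fromRows {U : Matrix m p R} {X : Matrix n p R}
    (hrank : (fromRows U X).rank = Fintype.card m + Fintype.card n) {x : m → R} {w : n → R}
    (hxw : x ᵥ* U = w ᵥ* X) : x = 0 := by
  have hnull : Sum.elim x (-w) ᵥ* fromRows U X = 0 ᵥ* fromRows U X := by
    rw [sumElim_vecMul_fromRows, neg_vecMul, hxw, add_neg_cancel, zero_vecMul]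
  have h := vecMul_injective_of_rank_eq_card (by rwa [Fintype.card_sum]) hnull
  funext i
  exact congrFun h (Sum.inl i)

theorem posDef_mul_mul_transpose_of_symm_of_idempotent {U : Matrix m p ℝ} {P : Matrix p p ℝ}
    (hsym : Pᵀ = P) (hidem : P * P = P) (hU : ∀ x, P *ᵥ (x ᵥ* U) = 0 → x = 0) :
    (U * P * Uᵀ).PosDef := by
  have hfactor : U * P * Uᵀ = U * P * (U * P)ᴴ := by
    rw [conjTranspose_eq_transpose_of_trivial, transpose_mul, hsym, Matrix.mul_assoc,
      Matrix.mul_assoc, ← Matrix.mul_assoc P, hidem]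
  have hker : ∀ x, x ᵥ* (U * P) = 0 → x = 0 := fun x hx =>
    hU x <| by rwa [← vecMul_vecMul, ← mulVec_transpose, hsym] at hx
  rw [hfactor]
  refine PosDef.mul_conjTranspose_self _ fun x y hxy => sub_eq_zero.1 <| hker _ ?_
  rw [sub_vecMul]
  exact sub_eq_zero.2 hxy

end Matrix

theorem stmt0_general (m n p : ℕ)
    (U : Matrix (Fin m) (Fin p) ℝ) (X : Matrix (Fin n) (Fin p) ℝ)
    (hrank : (Matrix.fromRows U X).rank = m + n)
    (Pr : Matrix (Fin p) (Fin p) ℝ)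
    (hsym : Prᵀ = Pr)
    (hidem : Pr * Pr = Pr)
    (hker : ∀ v : Fin p → ℝ, Pr.mulVec v = 0 → ∃ w : Fin n → ℝ, v = Xᵀ.mulVec w) :
    (U * Pr * Uᵀ).PosDef := by
  refine posDef_mul_mul_transpose_of_symm_of_idempotent hsym hidem fun x hx => ?_
  obtain ⟨w, hw⟩ := hker _ hx
  rw [mulVec_transpose] at hw
  exact eq_zero_of_vecMul_eq_of_rank_fromRows (by simpa using hrank) hw

/-- If the stacked matrix `[Uᵀ, Xᵀ]ᵀ` has full row rank `m + n` and
`Pr` is the orthogonal projection of `ℝ^p` onto the kernel of `X` (symmetric, idempotent,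
with range `{v | X v = 0}` and kernel the row space of `X`), then `M = U Pr Uᵀ` is
symmetric positive definite. -/
theorem stmt0 (m n p : ℕ) (hm : 0 < m) (hn : 0 < n) (hp : 0 < p)
    (U : Matrix (Fin m) (Fin p) ℝ) (X : Matrix (Fin n) (Fin p) ℝ)
    (hrank : (Matrix.fromRows U X).rank = m + n)
    (Pr : Matrix (Fin p) (Fin p) ℝ)
    (hsym : Prᵀ = Pr)
    (hidem : Pr * Pr = Pr)
    (hrange_sub : X * Pr = 0)
    (hrange_sup : ∀ v : Fin p → ℝ, X.mulVec v = 0 → Pr.mulVec v = v)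
    (hker : ∀ v : Fin p → ℝ, Pr.mulVec v = 0 → ∃ w : Fin n → ℝ, v = Xᵀ.mulVec w) :
    (U * Pr * Uᵀ).PosDef :=
  stmt0_general m n p U X hrank Pr hsym hidem hker
end

section
/- Let m, n be positive natural numbers and let Λ ∈ ℝ^{(m+n)×(m+n)} be a symmetric positive definite matrix whose smallest eigenvalue satisfies λ_min(Λ) ≥ γ² for some γ > 0. Write Λ as the vertical block stack of U ∈ ℝ^{m×(m+n)} (the first m rows of Λ) and X ∈ ℝ^{n×(m+n)} (the last n rows of Λ). Let Π ∈ ℝ^{(m+n)×(m+n)} be the matrix of the orthogonal projection of ℝ^{m+n} onto the kernel of X, and set M = U Π Uᵀ ∈ ℝ^{m×m}. Then M is symmetric positive semidefinite and its smallest eigenvalue satisfies λ_min(M) ≥ γ⁴. -/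
/-!
Fix `w : Fin m → ℝ`, put `z = (w, 0)` and `v = Λ⁻¹ z`. As `Λ v = z` vanishes in the last `n`
coordinates, `X v = 0`, hence `Π v = v`; by symmetry of `Λ`, `Uᵀ w = Λ z`, so
`wᵀ M w = ‖Π Λ z‖²` and `⟪v, Π Λ z⟫ = ⟪Λ v, z⟫ = ‖z‖²`. Coercivity gives
`γ² ‖v‖² ≤ ⟪v, Λ v⟫ ≤ ‖v‖ ‖z‖`, i.e. `γ² ‖v‖ ≤ ‖z‖`, and Cauchy–Schwarz
`‖z‖² = ⟪v, Π Λ z⟫ ≤ ‖v‖ ‖Π Λ z‖` then yields `γ² ‖w‖ ≤ ‖Π Λ z‖`, that is `γ⁴ ‖w‖² ≤ wᵀ M w`.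
-/

noncomputable section

open Matrix

/-- Smallest eigenvalue of a (symmetric) real matrix, as the infimum of its real spectrum. -/
def eigMin {n : Type*} [Fintype n] [DecidableEq n] (A : Matrix n n ℝ) : ℝ :=
  sInf (spectrum ℝ A)

section OrderedRing

variable {R : Type*} [CommRing R] [LinearOrder R] [IsStrictOrderedRing R]

theorem mul_le_of_sq_le_mul {k a b d : R} (hk : 0 ≤ k) (ha : 0 ≤ a) (hb : 0 ≤ b)
    (hsq : a ^ 2 ≤ d * b) (hd : k * d ≤ a) : k * a ≤ b := by
  rcases ha.eq_or_lt with rfl | ha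
  · simpa using hb
  · refine le_of_mul_le_mul_right ?_ ha
    nlinarith [mul_le_mul_of_nonneg_right hd hb]

variable {ι : Type*} [Fintype ι]

theorem dotProduct_self_nonneg (v : ι → R) : 0 ≤ v ⬝ᵥ v :=
  Finset.sum_nonneg fun i _ => mul_self_nonneg (v i)

theorem dotProduct_sq_le_dotProduct_self_mul (v u : ι → R) :
    (v ⬝ᵥ u) ^ 2 ≤ (v ⬝ᵥ v) * (u ⬝ᵥ u) := by
  simpa [dotProduct, sq] using Finset.sum_mul_sq_le_sq_mul_sq Finset.univ v u

end OrderedRing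

namespace Matrix

variable {ι : Type*} [Fintype ι]

theorem IsSymm.dotProduct_mulVec_comm {R : Type*} [CommSemiring R] {A : Matrix ι ι R}
    (hA : A.IsSymm) (x y : ι → R) : x ⬝ᵥ A *ᵥ y = y ⬝ᵥ A *ᵥ x := by
  conv_lhs => rw [← hA.eq]
  exact dotProduct_transpose_mulVec A x y

theorem submatrix_id_inl_mulVec {κ ρ R : Type*} [Fintype κ] [NonUnitalNonAssocSemiring R]
    (A : Matrix ρ (ι ⊕ κ) R) (w : ι → R) :
    A.submatrix id Sum.inl *ᵥ w = A *ᵥ Sum.elim w 0 := by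
  ext i
  simp [mulVec, dotProduct, Fintype.sum_sum_type]

theorem IsSymm.dotProduct_mulVec_eq_of_isIdempotentElem {P : Matrix ι ι ℝ} (hP : P.IsSymm)
    (hPP : IsIdempotentElem P) (y : ι → ℝ) :
    y ⬝ᵥ P *ᵥ y = P *ᵥ y ⬝ᵥ P *ᵥ y := by
  conv_lhs => rw [← hPP.eq, ← mulVec_mulVec]
  exact hP.dotProduct_mulVec_comm _ _

theorem IsSymm.posSemidef_of_isIdempotentElem [DecidableEq ι] {P : Matrix ι ι ℝ}
    (hP : P.IsSymm) (hPP : IsIdempotentElem P) : P.PosSemidef := by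
  have hP_eq : P = Pᴴ * P := by rw [conjTranspose_eq_transpose_of_trivial, hP.eq, hPP.eq]
  exact hP_eq ▸ posSemidef_conjTranspose_mul_self P

theorem sq_mul_dotProduct_self_le_of_coercive {A : Matrix ι ι ℝ} {c : ℝ} (hc : 0 ≤ c)
    (hA : ∀ x, c * (x ⬝ᵥ x) ≤ x ⬝ᵥ A *ᵥ x) (v : ι → ℝ) :
    c ^ 2 * (v ⬝ᵥ v) ≤ A *ᵥ v ⬝ᵥ A *ᵥ v := by
  have hcv : 0 ≤ c * (v ⬝ᵥ v) := mul_nonneg hc (dotProduct_self_nonneg v)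
  calc c ^ 2 * (v ⬝ᵥ v) = c * (c * (v ⬝ᵥ v)) := by ring
    _ ≤ c * (v ⬝ᵥ A *ᵥ v) := mul_le_mul_of_nonneg_left (hA v) hc
    _ ≤ A *ᵥ v ⬝ᵥ A *ᵥ v :=
      mul_le_of_sq_le_mul hc (hcv.trans (hA v)) (dotProduct_self_nonneg _)
        (dotProduct_sq_le_dotProduct_self_mul v _) (hA v)

theorem sq_mul_dotProduct_self_le_projected_form {Λ P : Matrix ι ι ℝ} {c : ℝ} (hc : 0 ≤ c)
    (hΛ : Λ.IsSymm) (hcoer : ∀ x, c * (x ⬝ᵥ x) ≤ x ⬝ᵥ Λ *ᵥ x)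
    (hP : P.IsSymm) (hPP : IsIdempotentElem P) {v z : ι → ℝ} (hv : Λ *ᵥ v = z)
    (hPv : P *ᵥ v = v) :
    c ^ 2 * (z ⬝ᵥ z) ≤ Λ *ᵥ z ⬝ᵥ P *ᵥ (Λ *ᵥ z) := by
  set u := P *ᵥ (Λ *ᵥ z)
  have hvu : v ⬝ᵥ u = z ⬝ᵥ z := by
    rw [hP.dotProduct_mulVec_comm, hPv, dotProduct_comm, hΛ.dotProduct_mulVec_comm, hv]
  rw [hP.dotProduct_mulVec_eq_of_isIdempotentElem hPP]
  exact mul_le_of_sq_le_mul (sq_nonneg c) (dotProduct_self_nonneg z) (dotProduct_self_nonneg u)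
    (hvu ▸ dotProduct_sq_le_dotProduct_self_mul v u)
    (hv ▸ sq_mul_dotProduct_self_le_of_coercive hc hcoer v)

end Matrix

open scoped MatrixOrder in
theorem le_eigMin_iff {ι : Type*} [Fintype ι] [DecidableEq ι] [Nonempty ι] {A : Matrix ι ι ℝ}
    (hA : A.IsSymm) {c : ℝ} : c ≤ eigMin A ↔ ∀ v, c * (v ⬝ᵥ v) ≤ v ⬝ᵥ A *ᵥ v := by
  have hA' : A.IsHermitian := isHermitian_iff_isSymm.mpr hA
  have hne : (spectrum ℝ A).Nonempty :=
    hA'.spectrum_real_eq_range_eigenvalues ▸ Set.range_nonempty _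
  rw [eigMin, le_csInf_iff A.finite_real_spectrum.bddBelow hne,
    ← algebraMap_le_iff_le_spectrum (a := A) hA'.isSelfAdjoint, le_iff,
    posSemidef_iff_dotProduct_mulVec]
  simp [hA.sub (isSymm_one.smul c), Algebra.algebraMap_eq_smul_one, sub_mulVec, smul_mulVec]

theorem stmt1_general (m n : ℕ) (hm : 0 < m)
    (Λ : Matrix (Fin m ⊕ Fin n) (Fin m ⊕ Fin n) ℝ)
    (hΛ : Λ.PosDef) (γ : ℝ) (hmin : γ ^ 2 ≤ eigMin Λ)
    (U : Matrix (Fin m) (Fin m ⊕ Fin n) ℝ) (hU : U = Λ.submatrix Sum.inl id)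
    (X : Matrix (Fin n) (Fin m ⊕ Fin n) ℝ) (hX : X = Λ.submatrix Sum.inr id)
    (Pr : Matrix (Fin m ⊕ Fin n) (Fin m ⊕ Fin n) ℝ)
    (hsym : Prᵀ = Pr)
    (hidem : Pr * Pr = Pr)
    (hrange_sup : ∀ v : Fin m ⊕ Fin n → ℝ, X.mulVec v = 0 → Pr.mulVec v = v)
    (M : Matrix (Fin m) (Fin m) ℝ) (hM : M = U * Pr * Uᵀ) :
    M.PosSemidef ∧ γ ^ 4 ≤ eigMin M := by
  have : Nonempty (Fin m) := ⟨⟨0, hm⟩⟩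
  have hΛsymm : Λ.IsSymm := isHermitian_iff_isSymm.mp hΛ.isHermitian
  have hPr : Pr.IsSymm := hsym
  have hM_psd : M.PosSemidef := by
    simpa [hM, conjTranspose_eq_transpose_of_trivial] using
      (hPr.posSemidef_of_isIdempotentElem hidem).mul_mul_conjTranspose_same U
  refine ⟨hM_psd, (le_eigMin_iff (isHermitian_iff_isSymm.mp hM_psd.isHermitian)).mpr fun w ↦ ?_⟩
  have hUw : Uᵀ *ᵥ w = Λ *ᵥ Sum.elim w 0 := by
    rw [hU, transpose_submatrix, hΛsymm.eq, submatrix_id_inl_mulVec]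
  obtain ⟨v, hv⟩ := mulVec_surjective_iff_isUnit.mpr hΛ.isUnit (Sum.elim w 0)
  have hPv : Pr *ᵥ v = v := hrange_sup v <| by
    subst hX
    ext k
    exact congrFun hv (Sum.inr k)
  calc γ ^ 4 * (w ⬝ᵥ w) = (γ ^ 2) ^ 2 * (Sum.elim w 0 ⬝ᵥ Sum.elim w (0 : Fin n → ℝ)) := by
        rw [sumElim_dotProduct_sumElim, dotProduct_zero, add_zero]; ring
    _ ≤ Uᵀ *ᵥ w ⬝ᵥ Pr *ᵥ (Uᵀ *ᵥ w) := by
      rw [hUw]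
      exact sq_mul_dotProduct_self_le_projected_form (sq_nonneg γ) hΛsymm
        ((le_eigMin_iff hΛsymm).mp hmin) hPr hidem hv hPv
    _ = w ⬝ᵥ M *ᵥ w := by
      rw [hM, ← mulVec_mulVec, ← mulVec_mulVec, dotProduct_mulVec w U, mulVec_transpose]

/-- Let `Λ` be symmetric positive definite with `λ_min(Λ) ≥ γ²`, written as the
vertical stack of `U` (first `m` rows) and `X` (last `n` rows), and let `Pr` be the orthogonal
projection onto the kernel of `X`.  Then `M = U Pr Uᵀ` is symmetric positive semidefinite with
`λ_min(M) ≥ γ⁴`. -/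
theorem stmt1 (m n : ℕ) (hm : 0 < m) (hn : 0 < n)
    (Λ : Matrix (Fin m ⊕ Fin n) (Fin m ⊕ Fin n) ℝ)
    (hΛ : Λ.PosDef) (γ : ℝ) (hγ : 0 < γ) (hmin : γ ^ 2 ≤ eigMin Λ)
    (U : Matrix (Fin m) (Fin m ⊕ Fin n) ℝ) (hU : U = Λ.submatrix Sum.inl id)
    (X : Matrix (Fin n) (Fin m ⊕ Fin n) ℝ) (hX : X = Λ.submatrix Sum.inr id)
    (Pr : Matrix (Fin m ⊕ Fin n) (Fin m ⊕ Fin n) ℝ)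
    (hsym : Prᵀ = Pr)
    (hidem : Pr * Pr = Pr)
    (hrange_sub : X * Pr = 0)
    (hrange_sup : ∀ v : Fin m ⊕ Fin n → ℝ, X.mulVec v = 0 → Pr.mulVec v = v)
    (M : Matrix (Fin m) (Fin m) ℝ) (hM : M = U * Pr * Uᵀ) :
    M.PosSemidef ∧ γ ^ 4 ≤ eigMin M :=
  stmt1_general m n hm Λ hΛ γ hmin U hU X hX Pr hsym hidem hrange_sup M hM
end
end

section
/- Let U₀ ∈ ℝ^{m×t}, X₀ ∈ ℝ^{n×t}, X₁ ∈ ℝ^{n×t}, and suppose D = [U₀ᵀ, X₀ᵀ]ᵀ ∈ ℝ^{(m+n)×t} has full row rank m+n. Define Λ = (1/t) D Dᵀ, Ū₀ = (1/t) U₀ Dᵀ, X̄₀ = (1/t) X₀ Dᵀ, X̄₁ = (1/t) X₁ Dᵀ, and the least-squares estimate [B̂, Â] = X₁ Dᵀ (D Dᵀ)⁻¹ with Â ∈ ℝ^{n×n} and B̂ ∈ ℝ^{n×m}. Then (i) Â X̄₀ + B̂ Ū₀ = X̄₁, and (ii) for any V, H ∈ ℝ^{(m+n)×n} and K, L ∈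 ℝ^{m×n} satisfying Λ V = [Kᵀ, I_n]ᵀ (as a block stack with top block K and bottom block I_n) and Λ H = [Lᵀ, 0]ᵀ (top block L, bottom block the n×n zero matrix), one has Â + B̂ K = X̄₁ V and B̂ L = X̄₁ H. -/
noncomputable section

open Matrix

lemma isUnit_of_rank_eq_card {k : Type*} [Fintype k] [DecidableEq k]
    (A : Matrix k k ℝ) (h : A.rank = Fintype.card k) : IsUnit A := by
  rw [← Matrix.mulVec_surjective_iff_isUnit]
  have : LinearMap.range A.mulVecLin = ⊤ := by
    apply Submodule.eq_top_of_finrank_eq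
    rw [← Matrix.rank, h, Module.finrank_fintype_fun_eq_card]
  intro y
  exact (LinearMap.range_eq_top.mp this) y

/-- With `D = [U₀ᵀ, X₀ᵀ]ᵀ` of full row rank, `Λ = (1/t) D Dᵀ`,
`Ū₀ = (1/t) U₀ Dᵀ`, `X̄₀ = (1/t) X₀ Dᵀ`, `X̄₁ = (1/t) X₁ Dᵀ` and the least-squares estimate
`[B̂, Â] = X₁ Dᵀ (D Dᵀ)⁻¹`, one has (i) `Â X̄₀ + B̂ Ū₀ = X̄₁`, and (ii) whenever
`Λ V = [Kᵀ, I]ᵀ` and `Λ H = [Lᵀ, 0]ᵀ`, `Â + B̂ K = X̄₁ V` and `B̂ L = X̄₁ H`. -/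
theorem stmt3 (m n t : ℕ) (ht : m + n ≤ t)
    (U₀ : Matrix (Fin m) (Fin t) ℝ) (X₀ X₁ : Matrix (Fin n) (Fin t) ℝ)
    (D : Matrix (Fin m ⊕ Fin n) (Fin t) ℝ) (hD : D = Matrix.fromRows U₀ X₀)
    (hrank : D.rank = m + n)
    (Λ : Matrix (Fin m ⊕ Fin n) (Fin m ⊕ Fin n) ℝ) (hΛ : Λ = (1 / (t : ℝ)) • (D * Dᵀ))
    (Ub : Matrix (Fin m) (Fin m ⊕ Fin n) ℝ) (hUb : Ub = (1 / (t : ℝ)) • (U₀ * Dᵀ))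
    (X0b : Matrix (Fin n) (Fin m ⊕ Fin n) ℝ) (hX0b : X0b = (1 / (t : ℝ)) • (X₀ * Dᵀ))
    (X1b : Matrix (Fin n) (Fin m ⊕ Fin n) ℝ) (hX1b : X1b = (1 / (t : ℝ)) • (X₁ * Dᵀ))
    (Θhat : Matrix (Fin n) (Fin m ⊕ Fin n) ℝ) (hΘhat : Θhat = X₁ * Dᵀ * (D * Dᵀ)⁻¹)
    (Bhat : Matrix (Fin n) (Fin m) ℝ) (hBhat : Bhat = Θhat.submatrix id Sum.inl)
    (Ahat : Matrix (Fin n) (Fin n) ℝ) (hAhat : Ahat = Θhat.submatrix id Sum.inr) :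
    Ahat * X0b + Bhat * Ub = X1b ∧
    ∀ (V H : Matrix (Fin m ⊕ Fin n) (Fin n) ℝ) (K L : Matrix (Fin m) (Fin n) ℝ),
      Λ * V = Matrix.fromRows K (1 : Matrix (Fin n) (Fin n) ℝ) →
      Λ * H = Matrix.fromRows L (0 : Matrix (Fin n) (Fin n) ℝ) →
      Ahat + Bhat * K = X1b * V ∧ Bhat * L = X1b * H := by
  -- D * Dᵀ is invertible
  have hcard : Fintype.card (Fin m ⊕ Fin n) = m + n := by simp
  have hunit : IsUnit (D * Dᵀ) := by
    apply isUnit_of_rank_eq_card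
    rw [Matrix.rank_self_mul_transpose, hrank, hcard]
  have hdet : IsUnit (D * Dᵀ).det := (Matrix.isUnit_iff_isUnit_det _).mp hunit
  -- key: Θhat * (D * Dᵀ) = X₁ * Dᵀ
  have hkey : Θhat * (D * Dᵀ) = X₁ * Dᵀ := by
    rw [hΘhat, Matrix.mul_assoc, Matrix.nonsing_inv_mul _ hdet, Matrix.mul_one]
  -- Θhat as fromColumns Bhat Ahat
  have hΘcols : Θhat = Matrix.fromCols Bhat Ahat := by
    rw [hBhat, hAhat]
    exact (Matrix.fromCols_toCols Θhat).symm
  have hkey2 : Θhat * Λ = X1b := by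
    rw [hΛ, hX1b, Matrix.mul_smul, hkey]
  constructor
  · have : Θhat * D = Bhat * U₀ + Ahat * X₀ := by
      rw [hΘcols, hD, Matrix.fromCols_mul_fromRows]
    calc Ahat * X0b + Bhat * Ub
        = (1 / (t : ℝ)) • ((Bhat * U₀ + Ahat * X₀) * Dᵀ) := by
          rw [hX0b, hUb, Matrix.add_mul, Matrix.mul_smul, Matrix.mul_smul, smul_add,
            Matrix.mul_assoc, Matrix.mul_assoc]
          rw [add_comm]
      _ = (1 / (t : ℝ)) • (Θhat * D * Dᵀ) := by rw [this]
      _ = X1b := by rw [Matrix.mul_assoc, hkey, hX1b]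
  · intro V H K L hV hH
    constructor
    · have : Θhat * (Λ * V) = Bhat * K + Ahat := by
        rw [hV, hΘcols, Matrix.fromCols_mul_fromRows, Matrix.mul_one]
      rw [← Matrix.mul_assoc, hkey2] at this
      rw [this, add_comm]
    · have : Θhat * (Λ * H) = Bhat * L := by
        rw [hH, hΘcols, Matrix.fromCols_mul_fromRows, Matrix.mul_zero, add_zero]
      rw [← Matrix.mul_assoc, hkey2] at this
      rw [this]
end
end

section
/- Let M ∈ ℝ^{n×n} satisfy ρ(M) < 1, let S ∈ ℝ^{n×n} be symmetric, and let N ∈ ℝ^{n×q} be arbitrary. Define P = Σ_{k=0}^∞ (Mᵀ)^k S M^k (the series converges since ρ(M) < 1) and Y = (I_n − M)⁻¹. Then tr(Nᵀ P N) + 2·tr(Nᵀ P M Y N) = tr(Nᵀ Yᵀ S Y N). -/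
noncomputable section

open Matrix

/-- Spectral radius of a real square matrix: supremum of the moduli of its complex eigenvalues. -/
def specRad {n : ℕ} (M : Matrix (Fin n) (Fin n) ℝ) : ℝ :=
  sSup ((fun μ : ℂ => ‖μ‖) '' spectrum ℂ (M.map (algebraMap ℝ ℂ)))

/-!
By Gelfand's formula, `ρ(M) < 1` gives `‖M ^ k‖ ≤ r ^ k` eventually for some `r < 1`, so the
series `P = ∑ (Mᵀ)^k S M^k` converges, and splitting off its first term gives the Lyapunov
equation `S + Mᵀ P M = P`. Substituting `S = P - Mᵀ P M` into `Yᵀ S Y` and using `M Y = Y - 1`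
gives `Yᵀ S Y = P + P M Y + Yᵀ Mᵀ P`. The last two terms are transposes of each other
(`P` is symmetric), so they have the same trace after conjugation by `N`.
-/

open Filter NNReal ENNReal

theorem eventually_norm_pow_le_of_spectralRadius_lt {A : Type*} [NormedRing A]
    [NormedAlgebra ℂ A] [CompleteSpace A] {a : A} {r : ℝ≥0} (h : spectralRadius ℂ a < r) :
    ∀ᶠ k : ℕ in atTop, ‖a ^ k‖ ≤ r ^ k := by
  have hgelfand := spectrum.pow_nnnorm_pow_one_div_tendsto_nhds_spectralRadius a
  filter_upwards [hgelfand.eventually_lt_const h, eventually_gt_atTop 0] with k hk hk0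
  rw [one_div, ENNReal.rpow_inv_lt_iff (by positivity), ENNReal.rpow_natCast] at hk
  exact_mod_cast hk.le

theorem norm_le_specRad {n : ℕ} (M : Matrix (Fin n) (Fin n) ℝ) {μ : ℂ}
    (hμ : μ ∈ spectrum ℂ (M.map (algebraMap ℝ ℂ))) : ‖μ‖ ≤ specRad M :=
  le_csSup ((Matrix.finite_spectrum _).image _).bddAbove ⟨μ, hμ, rfl⟩

theorem spectralRadius_map_lt_one_of_specRad_lt_one {n : ℕ} {M : Matrix (Fin n) (Fin n) ℝ}
    (hM : specRad M < 1) : spectralRadius ℂ (M.map (algebraMap ℝ ℂ)) < 1 :=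
  (iSup₂_le fun _ hμ => by
    simpa [← ENNReal.ofReal_coe_nnreal] using
      ENNReal.ofReal_le_ofReal (norm_le_specRad M hμ)).trans_lt (ENNReal.ofReal_lt_one.mpr hM)

theorem isUnit_det_one_sub_of_specRad_lt_one {n : ℕ} {M : Matrix (Fin n) (Fin n) ℝ}
    (hM : specRad M < 1) : IsUnit (1 - M).det := by
  have h1 : (1 : ℂ) ∉ spectrum ℂ (M.map (algebraMap ℝ ℂ)) := fun h => by
    simpa using (norm_le_specRad M h).trans_lt hM
  rw [spectrum.notMem_iff, map_one, Matrix.isUnit_iff_isUnit_det] at h1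
  have hmap : 1 - M.map (algebraMap ℝ ℂ) = (algebraMap ℝ ℂ).mapMatrix (1 - M) := by
    simp [Matrix.map_sub]
  rw [hmap, ← RingHom.map_det] at h1
  simpa [isUnit_iff_ne_zero] using h1

section Frobenius

/- The Frobenius norm is submultiplicative, invariant under transposition and preserved by
the entrywise embedding `ℝ → ℂ`, which is all the convergence argument needs. -/
attribute [local instance] Matrix.frobeniusNormedRing Matrix.frobeniusNormedAlgebra

variable {ι : Type*} [Fintype ι] [DecidableEq ι]

theorem frobenius_norm_map_algebraMap_pow (M : Matrix ι ι ℝ) (k : ℕ) :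
    ‖(M.map (algebraMap ℝ ℂ)) ^ k‖ = ‖M ^ k‖ := by
  rw [← RingHom.mapMatrix_apply, ← map_pow, RingHom.mapMatrix_apply]
  exact frobenius_norm_map_eq _ _ (by simp)

theorem summable_transpose_pow_mul_mul_pow {M : Matrix ι ι ℝ}
    (hM : spectralRadius ℂ (M.map (algebraMap ℝ ℂ)) < 1) (S : Matrix ι ι ℝ) :
    Summable fun k : ℕ => (Mᵀ) ^ k * S * M ^ k := by
  obtain ⟨r, hρr, hr⟩ := ENNReal.lt_iff_exists_nnreal_btwn.mp hM
  have hr1 : (r : ℝ) < 1 := by exact_mod_cast ENNReal.coe_lt_one_iff.mp hr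
  refine Summable.of_norm_bounded_eventually_nat (g := fun k => ‖S‖ * ((r : ℝ) ^ 2) ^ k)
    ((summable_geometric_of_lt_one (by positivity) (by nlinarith [r.coe_nonneg])).mul_left _) ?_
  filter_upwards [eventually_norm_pow_le_of_spectralRadius_lt hρr] with k hk
  rw [frobenius_norm_map_algebraMap_pow] at hk
  calc ‖(Mᵀ) ^ k * S * M ^ k‖ ≤ ‖(M ^ k)ᵀ‖ * ‖S‖ * ‖M ^ k‖ := by
        rw [← transpose_pow]
        exact (norm_mul_le _ _).trans (mul_le_mul_of_nonneg_right (norm_mul_le _ _) (norm_nonneg _))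
    _ = ‖M ^ k‖ * ‖S‖ * ‖M ^ k‖ := by rw [frobenius_norm_transpose]
    _ ≤ r ^ k * ‖S‖ * r ^ k := by gcongr
    _ = ‖S‖ * ((r : ℝ) ^ 2) ^ k := by ring

end Frobenius

theorem HasSum.add_mul_mul_eq {R : Type*} [Ring R] [TopologicalSpace R] [IsTopologicalRing R]
    [T2Space R] {a b s p : R} (h : HasSum (fun k : ℕ => b ^ k * s * a ^ k) p) :
    s + b * p * a = p := by
  have hshift : HasSum (fun k : ℕ => b ^ (k + 1) * s * a ^ (k + 1)) (b * p * a) := by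
    simpa only [pow_succ' b, pow_succ a, mul_assoc] using (h.mul_left b).mul_right a
  have htail := (hasSum_nat_add_iff' 1).mpr h
  simp only [Finset.range_one, Finset.sum_singleton, pow_zero, one_mul, mul_one] at htail
  rw [hshift.unique htail]
  abel

theorem transpose_tsum_transpose_pow_mul_mul_pow {ι R : Type*} [Fintype ι] [DecidableEq ι]
    [CommSemiring R] [TopologicalSpace R] [T2Space R] (M S : Matrix ι ι R) :
    (∑' k : ℕ, (Mᵀ) ^ k * S * M ^ k)ᵀ = ∑' k : ℕ, (Mᵀ) ^ k * Sᵀ * M ^ k := by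
  rw [transpose_tsum]
  congr 1
  ext1 k
  simp [transpose_mul, transpose_pow, mul_assoc]

theorem add_mul_mul_add_mul_mul_eq {R : Type*} [Ring R] {a b s p y z : R}
    (hp : s + b * p * a = p) (hy : a * y = y - 1) (hz : z * b = z - 1) :
    p + p * a * y + z * b * p = z * s * y := by
  have hs : s = p - b * p * a := eq_sub_of_add_eq hp
  calc p + p * a * y + z * b * p = p + p * (a * y) + (z * b) * p := by noncomm_ring
    _ = z * p * y - (z * b) * p * (a * y) := by rw [hy, hz]; noncomm_ring
    _ = z * s * y := by rw [hs]; noncomm_ring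

theorem trace_transpose_mul_transpose_mul {m q R : Type*} [Fintype m] [Fintype q]
    [CommSemiring R] (N : Matrix m q R) (X : Matrix m m R) :
    (Nᵀ * Xᵀ * N).trace = (Nᵀ * X * N).trace := by
  rw [← trace_transpose]
  simp only [transpose_mul, transpose_transpose, Matrix.mul_assoc]

/-- Let `ρ(M) < 1`, `S` symmetric, `P = Σ_k (Mᵀ)^k S M^k`, `Y = (I − M)⁻¹`.
Then `tr(NᵀPN) + 2 tr(NᵀPMYN) = tr(NᵀYᵀSYN)`. -/
theorem stmt7 (n q : ℕ) (M S : Matrix (Fin n) (Fin n) ℝ) (N : Matrix (Fin n) (Fin q) ℝ)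
    (hM : specRad M < 1) (hS : Sᵀ = S)
    (P : Matrix (Fin n) (Fin n) ℝ) (hP : P = ∑' k : ℕ, (Mᵀ) ^ k * S * M ^ k)
    (Y : Matrix (Fin n) (Fin n) ℝ) (hY : Y = (1 - M)⁻¹) :
    (Nᵀ * P * N).trace + 2 * (Nᵀ * P * M * Y * N).trace = (Nᵀ * Yᵀ * S * Y * N).trace := by
  have hPsum : HasSum (fun k : ℕ => (Mᵀ) ^ k * S * M ^ k) P :=
    hP ▸ (summable_transpose_pow_mul_mul_pow
      (spectralRadius_map_lt_one_of_specRad_lt_one hM) S).hasSum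
  have hPsymm : Pᵀ = P := by rw [hP, transpose_tsum_transpose_pow_mul_mul_pow, hS]
  have hMY : M * Y = Y - 1 := by
    have h := mul_nonsing_inv (1 - M) (isUnit_det_one_sub_of_specRad_lt_one hM)
    rw [← hY, sub_mul, one_mul, sub_eq_iff_eq_add'] at h
    exact eq_sub_of_add_eq h.symm
  have hYM : Yᵀ * Mᵀ = Yᵀ - 1 := by simpa [transpose_mul] using congrArg transpose hMY
  have hkey := add_mul_mul_add_mul_mul_eq hPsum.add_mul_mul_eq hMY hYM
  have hcross : Yᵀ * Mᵀ * P = (P * M * Y)ᵀ := by simp [transpose_mul, hPsymm, mul_assoc]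
  calc (Nᵀ * P * N).trace + 2 * (Nᵀ * P * M * Y * N).trace
      = (Nᵀ * (P + P * M * Y + Yᵀ * Mᵀ * P) * N).trace := by
        rw [hcross, Matrix.mul_add, Matrix.mul_add, Matrix.add_mul, Matrix.add_mul, trace_add,
          trace_add, trace_transpose_mul_transpose_mul]
        simp only [Matrix.mul_assoc]
        ring
    _ = (Nᵀ * Yᵀ * S * Y * N).trace := by rw [hkey]; simp only [Matrix.mul_assoc]
end
end

section
/- Fix A ∈ ℝ^{n×n}, B ∈ ℝ^{n×m}, and symmetric positive definite Q ∈ ℝ^{n×n}, R ∈ ℝ^{m×m}. For every policy θ = (K, L) with ρ(A+BK) < 1, the cost C(θ) = tr(Q + LᵀRL + LᵀBᵀP_K BL + n·P_K + 2G_θᵀBL) admits the alternative representation C(θ) = tr((Z_θ − I_n)ᵀ Q (Z_θ − I_n) + (K Z_θ + L)ᵀ R (K Z_θ + L) + n·P_K), where Z_θ = Y_K B L. -/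
noncomputable section

open Matrix

open scoped ENNReal NNReal

section Analytic
variable {n : ℕ}

attribute [local instance] Matrix.linftyOpNormedRing Matrix.linftyOpNormedAlgebra

lemma entry_le_linfty (A : Matrix (Fin n) (Fin n) ℂ) (i j : Fin n) : ‖A i j‖ ≤ ‖A‖ := by
  have h1 : ‖A i j‖₊ ≤ ∑ j', ‖A i j'‖₊ := Finset.single_le_sum (f := fun j' => ‖A i j'‖₊) (fun _ _ => zero_le) (Finset.mem_univ j)
  have h2 : (∑ j', ‖A i j'‖₊) ≤ Finset.univ.sup fun i => ∑ j', ‖A i j'‖₊ :=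
    Finset.le_sup (f := fun i => ∑ j', ‖A i j'‖₊) (Finset.mem_univ i)
  have := Matrix.linfty_opNNNorm_def A
  have h3 : ‖A i j‖₊ ≤ ‖A‖₊ := by rw [this]; exact h1.trans h2
  exact_mod_cast h3

lemma specRad_bound {M : Matrix (Fin n) (Fin n) ℝ} (h : specRad M < 1) :
    spectralRadius ℂ (M.map (algebraMap ℝ ℂ)) < 1 := by
  set Mc := M.map (algebraMap ℝ ℂ)
  have hfin : (spectrum ℂ Mc).Finite := Matrix.finite_spectrum Mc
  have hbdd : BddAbove ((fun μ : ℂ => ‖μ‖) '' spectrum ℂ Mc) := (hfin.image _).bddAbove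
  have hsr : spectralRadius ℂ Mc ≤ ENNReal.ofReal (specRad M) := by
    refine iSup₂_le fun μ hμ => ?_
    rw [← enorm_eq_nnnorm, ← ofReal_norm]
    exact ENNReal.ofReal_le_ofReal (le_csSup hbdd ⟨μ, hμ, rfl⟩)
  calc spectralRadius ℂ Mc ≤ ENNReal.ofReal (specRad M) := hsr
    _ < 1 := ENNReal.ofReal_lt_one.2 h

lemma pow_entry_bound {M : Matrix (Fin n) (Fin n) ℝ} (h : specRad M < 1) :
    ∃ C r : ℝ, 0 < C ∧ 0 ≤ r ∧ r < 1 ∧ ∀ k (i j : Fin n), |(M ^ k) i j| ≤ C * r ^ k := by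
  set Mc := M.map (algebraMap ℝ ℂ) with hMc
  haveI : CompleteSpace (Matrix (Fin n) (Fin n) ℂ) := FiniteDimensional.complete ℂ _
  have hlt : spectralRadius ℂ Mc < 1 := specRad_bound h
  obtain ⟨c, hc1, hc2⟩ := exists_between hlt
  have hcne : c ≠ ⊤ := (hc2.trans_le le_top).ne
  obtain ⟨r, hr0, hr1, hcr⟩ : ∃ r : ℝ, 0 < r ∧ r < 1 ∧ c ≤ ENNReal.ofReal r := by
    refine ⟨max c.toReal (1/2), lt_of_lt_of_le (by norm_num) (le_max_right _ _), ?_, ?_⟩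
    · apply max_lt _ (by norm_num)
      have := (ENNReal.toReal_lt_toReal hcne (by norm_num : (1:ℝ≥0∞) ≠ ⊤)).mpr hc2
      simpa using this
    · conv_lhs => rw [← ENNReal.ofReal_toReal hcne]
      exact ENNReal.ofReal_le_ofReal (le_max_left _ _)
  have hlt' : spectralRadius ℂ Mc < ENNReal.ofReal r := lt_of_lt_of_le hc1 hcr
  have T := spectrum.pow_nnnorm_pow_one_div_tendsto_nhds_spectralRadius Mc
  have hev : ∀ᶠ k : ℕ in Filter.atTop, (‖Mc ^ k‖₊ : ℝ≥0∞) ^ (1/(k:ℝ)) < ENNReal.ofReal r :=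
    T.eventually_lt_const hlt'
  obtain ⟨N, hN⟩ := (hev.and (Filter.eventually_ge_atTop 1)).exists_forall_of_atTop
  have key : ∀ k ≥ N, ‖Mc ^ k‖ ≤ r ^ k := by
    intro k hk
    obtain ⟨h1, h2⟩ := hN k hk
    have hk0 : (k:ℝ) ≠ 0 := Nat.cast_ne_zero.mpr (by omega)
    have h3 : ((‖Mc ^ k‖₊ : ℝ≥0∞) ^ (1/(k:ℝ))) ^ (k:ℝ) ≤ (ENNReal.ofReal r) ^ (k:ℝ) :=
      ENNReal.rpow_le_rpow h1.le (by positivity)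
    rw [← ENNReal.rpow_mul, one_div_mul_cancel hk0, ENNReal.rpow_one,
      ENNReal.rpow_natCast] at h3
    have h4 : (‖Mc ^ k‖₊ : ℝ≥0∞) ≤ ENNReal.ofReal (r ^ k) := by
      rwa [ENNReal.ofReal_pow hr0.le]
    rw [← enorm_eq_nnnorm, ← ofReal_norm] at h4
    exact (ENNReal.ofReal_le_ofReal_iff (pow_nonneg hr0.le k)).mp h4
  obtain ⟨C, hC1, hCb⟩ : ∃ C : ℝ, 1 ≤ C ∧ ∀ l < N, ‖Mc ^ l‖ ≤ C * r ^ l := by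
    refine ⟨1 + ∑ l ∈ Finset.range N, ‖Mc ^ l‖ / r ^ l, ?_, ?_⟩
    · have : (0:ℝ) ≤ ∑ l ∈ Finset.range N, ‖Mc ^ l‖ / r ^ l :=
        Finset.sum_nonneg fun l _ => div_nonneg (norm_nonneg _) (pow_nonneg hr0.le l)
      linarith
    · intro l hl
      have hrl : (0:ℝ) < r ^ l := pow_pos hr0 l
      have h5 : ‖Mc ^ l‖ / r ^ l ≤ ∑ l' ∈ Finset.range N, ‖Mc ^ l'‖ / r ^ l' :=
        Finset.single_le_sum (f := fun l' => ‖Mc ^ l'‖ / r ^ l')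
          (fun l' _ => div_nonneg (norm_nonneg _) (pow_nonneg hr0.le l'))
          (Finset.mem_range.mpr hl)
      rw [div_le_iff₀ hrl] at h5
      nlinarith
  refine ⟨C, r, by linarith, hr0.le, hr1, fun k i j => ?_⟩
  have hentry : |(M ^ k) i j| = ‖(Mc ^ k) i j‖ := by
    have hpow : Mc ^ k = (M ^ k).map (algebraMap ℝ ℂ) := by
      simp only [hMc, ← RingHom.mapMatrix_apply, ← map_pow]
    rw [hpow]
    simp [Matrix.map_apply, Real.norm_eq_abs]
  rw [hentry]
  have hb : ‖(Mc ^ k) i j‖ ≤ ‖Mc ^ k‖ := entry_le_linfty _ i j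
  rcases le_or_gt N k with hk | hk
  · have h6 := key k hk
    nlinarith [pow_nonneg hr0.le k]
  · have := hCb k hk
    linarith

end Analytic

section Lyap
variable {n : ℕ}

lemma summable_lyap {M Qh : Matrix (Fin n) (Fin n) ℝ} (h : specRad M < 1) :
    Summable (fun k : ℕ => (Mᵀ) ^ k * Qh * M ^ k) := by
  obtain ⟨C, r, hC0, hr0, hr1, hb⟩ := pow_entry_bound h
  refine Pi.summable.mpr ?_
  intro i
  refine Pi.summable.mpr ?_
  intro j
  have hrewrite : (fun k => ((Mᵀ) ^ k * Qh * M ^ k) i j)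
      = fun k => ∑ q, ∑ p, (M ^ k) p i * Qh p q * (M ^ k) q j := by
    funext k
    rw [Matrix.mul_apply]
    refine Finset.sum_congr rfl fun q _ => ?_
    rw [Matrix.mul_apply, Finset.sum_mul]
    refine Finset.sum_congr rfl fun p _ => ?_
    rw [← Matrix.transpose_pow, Matrix.transpose_apply]
  rw [hrewrite]
  refine summable_sum fun q _ => summable_sum fun p _ => ?_
  have hgeo : Summable (fun k : ℕ => (C * |Qh p q| * C) * (r * r) ^ k) :=
    (summable_geometric_of_lt_one (by positivity) (by nlinarith)).mul_left _
  refine Summable.of_abs (Summable.of_nonneg_of_le (fun k => abs_nonneg _) (fun k => ?_) hgeo)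
  have h1 := hb k p i
  have h2 := hb k q j
  have hq0 : (0:ℝ) ≤ |Qh p q| := abs_nonneg _
  have hrk : (0:ℝ) ≤ r ^ k := pow_nonneg hr0 k
  calc |(M ^ k) p i * Qh p q * (M ^ k) q j|
      = |(M ^ k) p i| * |Qh p q| * |(M ^ k) q j| := by rw [abs_mul, abs_mul]
    _ ≤ (C * r ^ k) * |Qh p q| * (C * r ^ k) := by
        apply mul_le_mul _ h2 (abs_nonneg _) (by positivity)
        exact mul_le_mul_of_nonneg_right h1 hq0
    _ = C * |Qh p q| * C * (r * r) ^ k := by rw [mul_pow]; ring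

lemma lyap_eq {M Qh : Matrix (Fin n) (Fin n) ℝ} (h : specRad M < 1) :
    (∑' k : ℕ, (Mᵀ) ^ k * Qh * M ^ k)
      = Qh + Mᵀ * (∑' k : ℕ, (Mᵀ) ^ k * Qh * M ^ k) * M := by
  have hs := summable_lyap (M := M) (Qh := Qh) h
  have h1 : Mᵀ * (∑' k : ℕ, (Mᵀ) ^ k * Qh * M ^ k) * M
      = ∑' k : ℕ, Mᵀ * ((Mᵀ) ^ k * Qh * M ^ k) * M := by
    rw [← hs.tsum_mul_left Mᵀ, ← (hs.mul_left Mᵀ).tsum_mul_right M]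
  have h2 : (fun k : ℕ => Mᵀ * ((Mᵀ) ^ k * Qh * M ^ k) * M)
      = fun k : ℕ => (Mᵀ) ^ (k+1) * Qh * M ^ (k+1) := by
    funext k
    rw [pow_succ M, pow_succ' (Mᵀ)]
    noncomm_ring
  rw [h1, h2]
  have h3 := Summable.tsum_eq_zero_add hs
  simpa using h3

lemma lyap_symm {M Qh : Matrix (Fin n) (Fin n) ℝ} (h : specRad M < 1) (hQh : Qhᵀ = Qh) :
    (∑' k : ℕ, (Mᵀ) ^ k * Qh * M ^ k)ᵀ = ∑' k : ℕ, (Mᵀ) ^ k * Qh * M ^ k := by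
  have hs := summable_lyap (M := M) (Qh := Qh) h
  have h2 : HasSum (fun k : ℕ => ((Mᵀ) ^ k * Qh * M ^ k)ᵀ)
      ((∑' k : ℕ, (Mᵀ) ^ k * Qh * M ^ k)ᵀ) :=
    hs.hasSum.map (Matrix.transposeAddEquiv (Fin n) (Fin n) ℝ).toAddMonoidHom
      continuous_id.matrix_transpose
  have h3 : (fun k : ℕ => ((Mᵀ) ^ k * Qh * M ^ k)ᵀ)
      = fun k : ℕ => (Mᵀ) ^ k * Qh * M ^ k := by
    funext k
    rw [Matrix.transpose_mul, Matrix.transpose_mul, Matrix.transpose_pow,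
      Matrix.transpose_pow, Matrix.transpose_transpose, hQh]
    noncomm_ring
  rw [h3] at h2
  exact h2.tsum_eq.symm

lemma isUnit_det_one_sub {M : Matrix (Fin n) (Fin n) ℝ} (h : specRad M < 1) :
    IsUnit (1 - M).det := by
  by_contra hc
  rw [isUnit_iff_ne_zero, not_ne_iff] at hc
  set Mc := M.map (algebraMap ℝ ℂ) with hMc
  have hmap : (1 : Matrix (Fin n) (Fin n) ℂ) - Mc = (1 - M).map (algebraMap ℝ ℂ) := by
    simp only [hMc, ← RingHom.mapMatrix_apply]
    rw [map_sub, _root_.map_one]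
  have hdetc : ((1 : Matrix (Fin n) (Fin n) ℂ) - Mc).det = 0 := by
    rw [hmap, ← RingHom.mapMatrix_apply, ← RingHom.map_det, hc, map_zero]
  have hnu : ¬ IsUnit ((1 : Matrix (Fin n) (Fin n) ℂ) - Mc) := by
    rw [Matrix.isUnit_iff_isUnit_det, hdetc]
    exact not_isUnit_zero
  have hmem : (1 : ℂ) ∈ spectrum ℂ Mc := by
    rw [spectrum.mem_iff, _root_.map_one]
    exact hnu
  have hfin : (spectrum ℂ Mc).Finite := Matrix.finite_spectrum Mc
  have hbdd : BddAbove ((fun μ : ℂ => ‖μ‖) '' spectrum ℂ Mc) := (hfin.image _).bddAbove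
  have : (1:ℝ) ≤ specRad M := by
    have := le_csSup hbdd ⟨(1:ℂ), hmem, rfl⟩
    simp only [norm_one] at this
    exact this
  linarith

end Lyap

lemma main_alg {n m : ℕ} (Q P M Z : Matrix (Fin n) (Fin n) ℝ) (R : Matrix (Fin m) (Fin m) ℝ)
    (K L : Matrix (Fin m) (Fin n) ℝ)
    (hQs : Qᵀ = Q) (hRs : Rᵀ = R) (hP : Pᵀ = P)
    (hLyap : Q + Kᵀ * R * K = P - Mᵀ * P * M) :
    (Q + Lᵀ * R * L + (Z - M*Z)ᵀ * P * (Z - M*Z) + (n:ℝ) • P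
      + (2:ℝ) • ((-Q + Kᵀ * R * L + Mᵀ * P * (Z - M*Z))ᵀ * Z)).trace
    = ((Z - 1)ᵀ * Q * (Z - 1) + (K * Z + L)ᵀ * R * (K * Z + L) + (n:ℝ) • P).trace := by
  simp only [Matrix.transpose_add, Matrix.transpose_sub, Matrix.transpose_mul,
    Matrix.transpose_neg, Matrix.transpose_transpose, Matrix.transpose_one, hQs, hRs, hP,
    Matrix.add_mul, Matrix.mul_add, Matrix.sub_mul, Matrix.mul_sub, Matrix.neg_mul,
    Matrix.mul_neg, Matrix.mul_one, Matrix.one_mul, add_mul, mul_add, sub_mul, mul_sub,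
    neg_mul, mul_neg, mul_one, one_mul,
    Matrix.trace_add, Matrix.trace_sub, Matrix.trace_neg, Matrix.trace_smul, Matrix.mul_assoc, mul_assoc]
  have h1 : (Zᵀ * Q).trace = (Q * Z).trace := by
    rw [← Matrix.trace_transpose (Zᵀ * Q), Matrix.transpose_mul, Matrix.transpose_transpose, hQs]
  have h2 : (Zᵀ * (Kᵀ * (R * L))).trace = (Lᵀ * (R * (K * Z))).trace := by
    rw [← Matrix.trace_transpose (Zᵀ * (Kᵀ * (R * L)))]
    simp [Matrix.transpose_mul, Matrix.transpose_transpose, hRs, Matrix.mul_assoc]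
  have h3 : (Zᵀ * (Mᵀ * (P * Z))).trace = (Zᵀ * (P * (M * Z))).trace := by
    rw [← Matrix.trace_transpose (Zᵀ * (Mᵀ * (P * Z)))]
    simp [Matrix.transpose_mul, Matrix.transpose_transpose, hP, Matrix.mul_assoc]
  have h4 : (Zᵀ * (Q * Z)).trace + (Zᵀ * (Kᵀ * (R * (K * Z)))).trace
      = (Zᵀ * (P * Z)).trace - (Zᵀ * (Mᵀ * (P * (M * Z)))).trace := by
    have e : (Zᵀ * ((Q + Kᵀ * R * K) * Z)).trace = (Zᵀ * ((P - Mᵀ * P * M) * Z)).trace := by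
      rw [hLyap]
    simpa [Matrix.add_mul, Matrix.sub_mul, Matrix.mul_add, Matrix.mul_sub,
      Matrix.trace_add, Matrix.trace_sub, Matrix.mul_assoc] using e
  simp only [smul_eq_mul]
  linear_combination h1 - h2 - h3 - h4

def Pmat {n m : ℕ} (A : Matrix (Fin n) (Fin n) ℝ) (B : Matrix (Fin n) (Fin m) ℝ)
    (Q : Matrix (Fin n) (Fin n) ℝ) (R : Matrix (Fin m) (Fin m) ℝ)
    (K : Matrix (Fin m) (Fin n) ℝ) : Matrix (Fin n) (Fin n) ℝ :=
  ∑' k : ℕ, ((A + B * K)ᵀ) ^ k * (Q + Kᵀ * R * K) * (A + B * K) ^ k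

def Ymat {n m : ℕ} (A : Matrix (Fin n) (Fin n) ℝ) (B : Matrix (Fin n) (Fin m) ℝ)
    (K : Matrix (Fin m) (Fin n) ℝ) : Matrix (Fin n) (Fin n) ℝ :=
  (1 - (A + B * K))⁻¹

def Gmat {n m : ℕ} (A : Matrix (Fin n) (Fin n) ℝ) (B : Matrix (Fin n) (Fin m) ℝ)
    (Q : Matrix (Fin n) (Fin n) ℝ) (R : Matrix (Fin m) (Fin m) ℝ)
    (K L : Matrix (Fin m) (Fin n) ℝ) : Matrix (Fin n) (Fin n) ℝ :=
  (Ymat A B K)ᵀ * (-Q + Kᵀ * R * L + (A + B * K)ᵀ * Pmat A B Q R K * (B * L))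

/-- `Z_θ = Y_K B L`. -/
def Zmat {n m : ℕ} (A : Matrix (Fin n) (Fin n) ℝ) (B : Matrix (Fin n) (Fin m) ℝ)
    (K L : Matrix (Fin m) (Fin n) ℝ) : Matrix (Fin n) (Fin n) ℝ :=
  Ymat A B K * (B * L)

def costC {n m : ℕ} (A : Matrix (Fin n) (Fin n) ℝ) (B : Matrix (Fin n) (Fin m) ℝ)
    (Q : Matrix (Fin n) (Fin n) ℝ) (R : Matrix (Fin m) (Fin m) ℝ)
    (K L : Matrix (Fin m) (Fin n) ℝ) : ℝ :=
  (Q + Lᵀ * R * L + Lᵀ * Bᵀ * Pmat A B Q R K * (B * L) + (n : ℝ) • Pmat A B Q R K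
    + (2 : ℝ) • ((Gmat A B Q R K L)ᵀ * (B * L))).trace

/-- Alternative representation of the LQT cost:
`C(θ) = tr((Z_θ − I)ᵀQ(Z_θ − I) + (KZ_θ + L)ᵀR(KZ_θ + L) + n P_K)`. -/
theorem stmt10 (n m : ℕ)
    (A : Matrix (Fin n) (Fin n) ℝ) (B : Matrix (Fin n) (Fin m) ℝ)
    (Q : Matrix (Fin n) (Fin n) ℝ) (R : Matrix (Fin m) (Fin m) ℝ)
    (hQ : Q.PosDef) (hR : R.PosDef)
    (K L : Matrix (Fin m) (Fin n) ℝ) (hstab : specRad (A + B * K) < 1) :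
    costC A B Q R K L =
      ((Zmat A B K L - 1)ᵀ * Q * (Zmat A B K L - 1)
        + (K * Zmat A B K L + L)ᵀ * R * (K * Zmat A B K L + L)
        + (n : ℝ) • Pmat A B Q R K).trace := by
  have hQs : Qᵀ = Q := by
    have := hQ.isHermitian.eq
    rwa [Matrix.conjTranspose_eq_transpose_of_trivial] at this
  have hRs : Rᵀ = R := by
    have := hR.isHermitian.eq
    rwa [Matrix.conjTranspose_eq_transpose_of_trivial] at this
  have hQhs : (Q + Kᵀ * R * K)ᵀ = Q + Kᵀ * R * K := by
    rw [Matrix.transpose_add, hQs, Matrix.transpose_mul, Matrix.transpose_mul,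
      Matrix.transpose_transpose, hRs, Matrix.mul_assoc]
  set M : Matrix (Fin n) (Fin n) ℝ := A + B * K with hM
  have hP : (Pmat A B Q R K)ᵀ = Pmat A B Q R K := lyap_symm hstab hQhs
  have hLyapP : Pmat A B Q R K
      = (Q + Kᵀ * R * K) + Mᵀ * Pmat A B Q R K * M := lyap_eq hstab
  have hLyap : Q + Kᵀ * R * K
      = Pmat A B Q R K - Mᵀ * Pmat A B Q R K * M := by
    rw [eq_sub_iff_add_eq]; exact hLyapP.symm
  have hdet : IsUnit (1 - M).det := isUnit_det_one_sub hstab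
  have hYl : (1 - M) * Ymat A B K = 1 := by
    rw [Ymat, ← hM]
    exact Matrix.mul_nonsing_inv _ hdet
  have hBL : B * L = Zmat A B K L - M * Zmat A B K L := by
    have e1 : (1 - M) * (Ymat A B K * (B * L)) = B * L := by
      rw [← Matrix.mul_assoc, hYl, Matrix.one_mul]
    have e2 : Zmat A B K L = Ymat A B K * (B * L) := rfl
    calc B * L = (1 - M) * (Ymat A B K * (B * L)) := e1.symm
      _ = (1 - M) * Zmat A B K L := by rw [← e2]
      _ = Zmat A B K L - M * Zmat A B K L := by rw [Matrix.sub_mul, Matrix.one_mul]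
  have hGBL : (Gmat A B Q R K L)ᵀ * (B * L)
      = (-Q + Kᵀ * R * L + Mᵀ * Pmat A B Q R K * (B * L))ᵀ * Zmat A B K L := by
    rw [Gmat, Matrix.transpose_mul, Matrix.transpose_transpose, Matrix.mul_assoc, ← hM]
    rfl
  rw [costC, hGBL]
  have hLB : Lᵀ * Bᵀ = (Zmat A B K L - M * Zmat A B K L)ᵀ := by
    rw [← Matrix.transpose_mul, hBL]
  rw [hLB, hBL]
  exact main_alg Q (Pmat A B Q R K) M (Zmat A B K L) R K L hQs hRs hP hLyap
end
end
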